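/- arXiv:2105.09054 — 4 statements merged into one kernel-verified Lean document; each statement's English description precedes it below -/
import Mathlib

section
/- Let 1 < q < 2. The Legendre–Fenchel transform of F_q, namely F_q^*(s,ξ) = sup over (t,x) ∈ ℝ×ℝ^N of [s t + ⟨ξ,x⟩ − F_q(t,x)], is given by: F_q^*(s,ξ) = α_q |ξ|^{2q/(2−q)} |s|^{2(1−q)/(2−q)} if s < 0 and ξ ∈ ℝ^N; F_q^*(0,0) = 0; and F_q^*(s,ξ) = +∞ otherwise, where α_q = ((2−q)/(2q)) ((q−1)/q)^{2(q−1)/(2−q)} (1/2)^{q/(2−q)}. -/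
open MeasureTheory Filter Topology Set
open scoped ENNReal NNReal

noncomputable section

abbrev Euc (N : ℕ) := EuclideanSpace ℝ (Fin N)

open Classical in
/-- The function `F_q : ℝ × ℝ^N → [0,+∞]`, with values in `EReal`. -/
def Fq {N : ℕ} (q : ℝ) (t : ℝ) (x : Euc N) : EReal :=
  if 0 < t then ((‖x‖ ^ 2 * t ^ (2 / q - 2) : ℝ) : EReal)
  else if t = 0 ∧ x = 0 then 0 else ⊤

/-- The Legendre–Fenchel transform of `H : ℝ × ℝ^N → (-∞,+∞]`:
`H^*(s,ξ) = sup_{(t,x)} [s t + ⟨ξ,x⟩ - H(t,x)]`. -/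
def legendre {N : ℕ} (H : ℝ → Euc N → EReal) (s : ℝ) (ξ : Euc N) : EReal :=
  ⨆ t : ℝ, ⨆ x : Euc N, (((s * t + (inner ℝ ξ x : ℝ)) : ℝ) : EReal) - H t x

/-- The constant `α_q`. -/
def alphaq (q : ℝ) : ℝ :=
  (2 - q) / (2 * q) * ((q - 1) / q) ^ (2 * (q - 1) / (2 - q)) * (1 / 2 : ℝ) ^ (q / (2 - q))

lemma eq_of_log_eq {x y : ℝ} (hx : 0 < x) (hy : 0 < y) (h : Real.log x = Real.log y) : x = y := by
  rw [← Real.exp_log hx, ← Real.exp_log hy, h]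

/-- quadratic bound in `a`. -/
lemma aux_quad {a n T : ℝ} (hT : 0 < T) : a * n - a ^ 2 * T ≤ n ^ 2 / (4 * T) := by
  rw [← sub_nonneg]
  have h : n ^ 2 / (4 * T) - (a * n - a ^ 2 * T) = (2 * T * a - n) ^ 2 / (4 * T) := by
    field_simp
    ring
  rw [h]
  positivity

/-- Young-type bound. -/
lemma aux_young {γ c σ t : ℝ} (hγ0 : 0 < γ) (hγ1 : γ < 1) (hc : 0 < c) (hσ : 0 < σ)
    (ht : 0 < t) :
    c * t ^ γ ≤ σ * t + (1 - γ) * c * (c * γ / σ) ^ (γ / (1 - γ)) := by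
  have h1γ : (0:ℝ) < 1 - γ := by linarith
  have hpq : (1/γ).HolderConjugate (1/(1-γ)) := by
    refine Real.holderConjugate_iff.mpr ⟨?_, ?_⟩
    · rw [lt_div_iff₀ hγ0]; linarith
    · rw [one_div, one_div, inv_inv, inv_inv]; ring
  have key := Real.young_inequality_of_nonneg
    (a := (σ * t / γ) ^ γ) (b := c * (γ / σ) ^ γ)
    (by positivity) (by positivity) hpq
  have hbase : (σ * t / γ) * (γ / σ) = t := by
    field_simp
  have e1 : (σ * t / γ) ^ γ * (c * (γ / σ) ^ γ) = c * t ^ γ := by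
    rw [mul_comm c, ← mul_assoc, ← Real.mul_rpow (by positivity) (by positivity), hbase,
      mul_comm]
  have e2 : ((σ * t / γ) ^ γ) ^ (1/γ) / (1/γ) = σ * t := by
    rw [← Real.rpow_mul (by positivity : (0:ℝ) ≤ σ * t / γ), mul_one_div,
      div_self hγ0.ne', Real.rpow_one, one_div, div_inv_eq_mul, div_mul_cancel₀ _ hγ0.ne']
  have e3 : (c * (γ / σ) ^ γ) ^ (1/(1-γ)) / (1/(1-γ))
      = (1 - γ) * c * (c * γ / σ) ^ (γ / (1 - γ)) := by
    rw [one_div, div_inv_eq_mul, mul_comm _ (1 - γ), mul_assoc]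
    congr 1
    apply eq_of_log_eq (by positivity) (by positivity)
    rw [Real.log_rpow (by positivity), Real.log_mul hc.ne' (by positivity),
      Real.log_rpow (by positivity), Real.log_div hγ0.ne' hσ.ne',
      Real.log_mul hc.ne' (by positivity), Real.log_rpow (by positivity),
      Real.log_div (by positivity : (c*γ:ℝ) ≠ 0) hσ.ne',
      Real.log_mul hc.ne' hγ0.ne']
    field_simp
    ring
  rw [e1, e2, e3] at key
  exact key

/-- value at the optimal `t`. -/
lemma aux_eq {γ c σ : ℝ} (hγ0 : 0 < γ) (hγ1 : γ < 1) (hc : 0 < c) (hσ : 0 < σ) :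
    -(σ * ((c * γ / σ) ^ (1/(1-γ)))) + c * ((c * γ / σ) ^ (1/(1-γ))) ^ γ
      = (1 - γ) * c * (c * γ / σ) ^ (γ / (1 - γ)) := by
  have h1γ : (0:ℝ) < 1 - γ := by linarith
  have hb : (0:ℝ) < c * γ / σ := by positivity
  have h1 : ((c * γ / σ) ^ (1/(1-γ))) ^ γ = (c * γ / σ) ^ (γ/(1-γ)) := by
    rw [← Real.rpow_mul hb.le, one_div, inv_mul_eq_div]
  have hexp : 1/(1-γ) = γ/(1-γ) + 1 := by field_simp; ring
  have h2 : (c * γ / σ) ^ (1/(1-γ)) = (c * γ / σ) ^ (γ/(1-γ)) * (c * γ / σ) := by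
    rw [hexp, Real.rpow_add hb, Real.rpow_one]
  rw [h1, h2]
  have : σ * ((c * γ / σ) ^ (γ/(1-γ)) * (c * γ / σ)) = (c * γ / σ) ^ (γ/(1-γ)) * (c * γ) := by
    field_simp
  rw [this]
  ring

lemma aux_const {q n σ : ℝ} (hq1 : 1 < q) (hq2 : q < 2) (hn : 0 < n) (hσ : 0 < σ) :
    (1 - (2 - 2/q)) * (n^2/4) * ((n^2/4) * (2 - 2/q) / σ) ^ ((2 - 2/q) / (1 - (2 - 2/q)))
      = alphaq q * n ^ (2*q/(2-q)) * σ ^ (2*(1-q)/(2-q)) := by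
  have hq0 : (0:ℝ) < q := by linarith
  have h2q : (0:ℝ) < 2 - q := by linarith
  have hq1' : (0:ℝ) < q - 1 := by linarith
  have hγ : (0:ℝ) < 2 - 2/q := by
    rw [sub_pos, div_lt_iff₀ hq0]; linarith
  have h1γ : (0:ℝ) < 1 - (2 - 2/q) := by
    have : (1:ℝ) < 2/q := by rw [lt_div_iff₀ hq0]; linarith
    linarith
  have hc : (0:ℝ) < n^2/4 := by positivity
  have hB : (0:ℝ) < (n^2/4) * (2 - 2/q) / σ := by positivity
  have hE : (2 - 2/q) / (1 - (2 - 2/q)) = 2*(q-1)/(2-q) := by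
    rw [div_eq_div_iff (by linarith : (1 - (2 - 2/q)) ≠ 0) h2q.ne']
    field_simp
    ring
  have hγeq : 2 - 2/q = 2*(q-1)/q := by field_simp
  have h1γeq : 1 - (2 - 2/q) = (2-q)/q := by field_simp; ring
  have lγ : Real.log (2 - 2/q) = Real.log 2 + Real.log (q-1) - Real.log q := by
    rw [hγeq, Real.log_div (by positivity) hq0.ne', Real.log_mul (by norm_num) hq1'.ne']
  have l1γ : Real.log (1 - (2 - 2/q)) = Real.log (2-q) - Real.log q := by
    rw [h1γeq, Real.log_div h2q.ne' hq0.ne']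
  have lc : Real.log (n^2/4) = 2*Real.log n - 2*Real.log 2 := by
    rw [Real.log_div (by positivity) (by norm_num), Real.log_pow,
      (by norm_num : (4:ℝ) = 2^2), Real.log_pow]
    push_cast; ring
  have lB : Real.log ((n^2/4) * (2 - 2/q) / σ)
      = (2*Real.log n - 2*Real.log 2) + (Real.log 2 + Real.log (q-1) - Real.log q)
        - Real.log σ := by
    rw [Real.log_div (by positivity) hσ.ne', Real.log_mul hc.ne' hγ.ne', lc, lγ]
  apply eq_of_log_eq (by positivity) (by rw [alphaq]; positivity)
  rw [alphaq, hE]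
  rw [Real.log_mul (by positivity) (by positivity : ((n^2/4) * (2 - 2/q) / σ) ^ (2*(q-1)/(2-q)) ≠ 0),
    Real.log_mul h1γ.ne' hc.ne', Real.log_rpow hB, l1γ, lc, lB]
  rw [Real.log_mul (by positivity : ((2 - q) / (2 * q) * ((q - 1) / q) ^ (2 * (q - 1) / (2 - q)) * (1 / 2 : ℝ) ^ (q / (2 - q)) * n ^ (2*q/(2-q)) : ℝ) ≠ 0) (by positivity),
    Real.log_mul (by positivity : ((2 - q) / (2 * q) * ((q - 1) / q) ^ (2 * (q - 1) / (2 - q)) * (1 / 2 : ℝ) ^ (q / (2 - q)) : ℝ) ≠ 0) (by positivity),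
    Real.log_mul (by positivity : ((2 - q) / (2 * q) * ((q - 1) / q) ^ (2 * (q - 1) / (2 - q)) : ℝ) ≠ 0) (by positivity),
    Real.log_mul (by positivity : ((2 - q) / (2 * q) : ℝ) ≠ 0) (by positivity),
    Real.log_rpow (by positivity : (0:ℝ) < (q-1)/q),
    Real.log_rpow (by norm_num : (0:ℝ) < (1/2:ℝ)),
    Real.log_rpow hn, Real.log_rpow hσ,
    Real.log_div h2q.ne' (by positivity : (2*q:ℝ) ≠ 0),
    Real.log_mul (by norm_num : (2:ℝ) ≠ 0) hq0.ne',
    Real.log_div hq1'.ne' hq0.ne',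
    one_div, Real.log_inv]
  field_simp
  ring

open Classical in
/-- **Lemma.** For `1 < q < 2`, the Legendre–Fenchel transform of `F_q` is
`F_q^*(s,ξ) = α_q |ξ|^{2q/(2-q)} |s|^{2(1-q)/(2-q)}` for `s < 0`, `0` at `(0,0)`,
and `+∞` otherwise. -/
theorem legendre_Fq {N : ℕ} (q : ℝ) (hq1 : 1 < q) (hq2 : q < 2) (s : ℝ) (ξ : Euc N) :
    legendre (Fq q) s ξ =
      if s < 0 then
        ((alphaq q * ‖ξ‖ ^ (2 * q / (2 - q)) * |s| ^ (2 * (1 - q) / (2 - q)) : ℝ) : EReal)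
      else if s = 0 ∧ ξ = 0 then 0 else ⊤ := by
  have hq0 : (0:ℝ) < q := by linarith
  have hγ : (0:ℝ) < 2 - 2/q := by rw [sub_pos, div_lt_iff₀ hq0]; linarith
  have h1γ : (0:ℝ) < 1 - (2 - 2/q) := by
    have : (1:ℝ) < 2/q := by rw [lt_div_iff₀ hq0]; linarith
    linarith
  have hβ : 2/q - 2 = -(2 - 2/q) := by ring
  have hterm : ∀ t : ℝ, 0 < t → ∀ x : Euc N,
      (((s * t + (inner ℝ ξ x : ℝ)) : ℝ) : EReal) - Fq q t x
        = (((s * t + (inner ℝ ξ x : ℝ) - ‖x‖ ^ 2 * t ^ (2 / q - 2) : ℝ)) : EReal) := by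
    intro t ht x
    rw [Fq, if_pos ht, ← EReal.coe_sub]
  have hterm0 : (((s * 0 + (inner ℝ ξ (0 : Euc N) : ℝ)) : ℝ) : EReal) - Fq q 0 (0 : Euc N) = 0 := by
    simp [Fq]
  have hbot : ∀ t : ℝ, ¬ 0 < t → ∀ x : Euc N, ¬ (t = 0 ∧ x = 0) →
      (((s * t + (inner ℝ ξ x : ℝ)) : ℝ) : EReal) - Fq q t x = ⊥ := by
    intro t ht x h0
    rw [Fq, if_neg ht, if_neg h0, EReal.sub_top]
  rw [legendre]
  rcases lt_trichotomy s 0 with hs | hs | hs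
  · -- s < 0
    rw [if_pos hs]
    by_cases hξ : ξ = 0
    · subst hξ
      have he : ‖(0 : Euc N)‖ ^ (2*q/(2-q)) = 0 := by
        rw [norm_zero]
        exact Real.zero_rpow (div_pos (by linarith) (by linarith : (0:ℝ) < 2 - q)).ne'
      rw [he, mul_zero, zero_mul, EReal.coe_zero]
      apply le_antisymm
      · apply iSup_le; intro t; apply iSup_le; intro x
        by_cases ht : 0 < t
        · rw [hterm t ht x]
          have hT : 0 < t ^ (2/q - 2) := Real.rpow_pos_of_pos ht _
          have : s * t + (inner ℝ (0 : Euc N) x : ℝ) - ‖x‖ ^ 2 * t ^ (2/q-2) ≤ 0 := by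
            have h1 : (inner ℝ (0 : Euc N) x : ℝ) = 0 := inner_zero_left x
            rw [h1]
            nlinarith [mul_neg_of_neg_of_pos hs ht, mul_nonneg (sq_nonneg ‖x‖) hT.le]
          exact_mod_cast this
        · by_cases h0 : t = 0 ∧ x = 0
          · obtain ⟨rfl, rfl⟩ := h0; rw [hterm0]
          · rw [hbot t ht x h0]; exact bot_le
      · refine le_iSup_of_le 0 (le_iSup_of_le 0 ?_)
        rw [hterm0]
    · have hn : 0 < ‖ξ‖ := norm_pos_iff.mpr hξ
      have hσ : 0 < -s := neg_pos.mpr hs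
      have hc : (0:ℝ) < ‖ξ‖^2/4 := by positivity
      have habs : |s| = -s := abs_of_neg hs
      have hRHS : (alphaq q * ‖ξ‖ ^ (2*q/(2-q)) * |s| ^ (2*(1-q)/(2-q)) : ℝ)
          = (1 - (2 - 2/q)) * (‖ξ‖^2/4)
              * ((‖ξ‖^2/4) * (2 - 2/q) / (-s)) ^ ((2 - 2/q) / (1 - (2 - 2/q))) := by
        rw [habs]; exact (aux_const hq1 hq2 hn hσ).symm
      rw [hRHS]
      set M : ℝ := (1 - (2 - 2/q)) * (‖ξ‖^2/4)
              * ((‖ξ‖^2/4) * (2 - 2/q) / (-s)) ^ ((2 - 2/q) / (1 - (2 - 2/q))) with hM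
      have hMpos : 0 < M := by positivity
      apply le_antisymm
      · apply iSup_le; intro t; apply iSup_le; intro x
        by_cases ht : 0 < t
        · rw [hterm t ht x, EReal.coe_le_coe_iff]
          have hT : 0 < t ^ (2/q - 2) := Real.rpow_pos_of_pos ht _
          have h1 : (inner ℝ ξ x : ℝ) ≤ ‖ξ‖ * ‖x‖ := real_inner_le_norm ξ x
          have h2 : ‖x‖ * ‖ξ‖ - ‖x‖^2 * t^(2/q-2) ≤ ‖ξ‖^2/(4 * t^(2/q-2)) := aux_quad hT
          have h3 : ‖ξ‖^2/(4 * t^(2/q-2)) = (‖ξ‖^2/4) * t^(2-2/q) := by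
            rw [hβ, Real.rpow_neg ht.le]
            field_simp
          have h4 := aux_young hγ (by linarith) hc hσ ht
          rw [hM]
          nlinarith [h1, h2, h3, h4]
        · by_cases h0 : t = 0 ∧ x = 0
          · obtain ⟨rfl, rfl⟩ := h0
            rw [hterm0]
            exact_mod_cast hMpos.le
          · rw [hbot t ht x h0]; exact bot_le
      · set T : ℝ := ((‖ξ‖^2/4) * (2 - 2/q) / (-s)) ^ (1/(1-(2-2/q))) with hTdef
        have hTpos : 0 < T := Real.rpow_pos_of_pos (by positivity) _
        set xs : Euc N := (T^(2-2/q)/2) • ξ with hxs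
        refine le_iSup_of_le T (le_iSup_of_le xs ?_)
        rw [hterm T hTpos xs, EReal.coe_le_coe_iff]
        have hx_inner : (inner ℝ ξ xs : ℝ) = (T^(2-2/q)/2) * ‖ξ‖^2 := by
          rw [hxs, real_inner_smul_right, real_inner_self_eq_norm_sq]
        have hx_norm : ‖xs‖^2 = (T^(2-2/q)/2)^2 * ‖ξ‖^2 := by
          rw [hxs, norm_smul, Real.norm_eq_abs,
            abs_of_pos (by positivity : (0:ℝ) < T^(2-2/q)/2)]
          ring
        have hTT : T^(2-2/q) * T^(2/q-2) = 1 := by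
          rw [hβ, Real.rpow_neg hTpos.le,
            mul_inv_cancel₀ (Real.rpow_pos_of_pos hTpos _).ne']
        have hval : s*T + (inner ℝ ξ xs : ℝ) - ‖xs‖^2 * T^(2/q-2)
            = -((-s)*T) + (‖ξ‖^2/4) * T^(2-2/q) := by
          rw [hx_inner, hx_norm]
          have expand : (T^(2-2/q)/2)^2 * ‖ξ‖^2 * T^(2/q-2)
              = ‖ξ‖^2/4 * (T^(2-2/q) * (T^(2-2/q) * T^(2/q-2))) := by ring
          rw [expand, hTT, mul_one]
          ring
        rw [hval]
        have hfin := aux_eq hγ (by linarith) hc hσ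
        rw [hM, hTdef]
        exact le_of_eq hfin.symm
  · -- s = 0
    subst hs
    rw [if_neg (lt_irrefl 0)]
    by_cases hξ : ξ = 0
    · subst hξ
      rw [if_pos ⟨rfl, rfl⟩]
      apply le_antisymm
      · apply iSup_le; intro t; apply iSup_le; intro x
        by_cases ht : 0 < t
        · rw [hterm t ht x]
          have hT : 0 < t ^ (2/q - 2) := Real.rpow_pos_of_pos ht _
          have : (0:ℝ) * t + (inner ℝ (0 : Euc N) x : ℝ) - ‖x‖ ^ 2 * t ^ (2/q-2) ≤ 0 := by
            have h1 : (inner ℝ (0 : Euc N) x : ℝ) = 0 := inner_zero_left x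
            nlinarith [mul_nonneg (sq_nonneg ‖x‖) hT.le]
          exact_mod_cast this
        · by_cases h0 : t = 0 ∧ x = 0
          · obtain ⟨rfl, rfl⟩ := h0; rw [hterm0]
          · rw [hbot t ht x h0]; exact bot_le
      · refine le_iSup_of_le 0 (le_iSup_of_le 0 ?_)
        rw [hterm0]
    · rw [if_neg (by simp [hξ])]
      rw [EReal.eq_top_iff_forall_lt]
      intro y
      have hn : 0 < ‖ξ‖ := norm_pos_iff.mpr hξ
      set r : ℝ := (|y| + 2)/‖ξ‖^2 with hr
      have hrpos : 0 < r := by positivity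
      set cc : ℝ := r^2 * ‖ξ‖^2 with hcc
      have hccpos : 0 < cc := by positivity
      set t : ℝ := (cc + 1) ^ (1/(2-2/q)) with htdef
      have htpos : 0 < t := Real.rpow_pos_of_pos (by positivity) _
      have htβ : t ^ (2/q - 2) = (cc + 1)⁻¹ := by
        rw [hβ, htdef, ← Real.rpow_mul (by positivity : (0:ℝ) ≤ cc + 1)]
        have hexp : (1/(2-2/q)) * (-(2-2/q)) = -1 := by
          field_simp
          rw [div_self (by linarith : (q - 1:ℝ) ≠ 0)]
        rw [hexp, Real.rpow_neg_one]
      set xx : Euc N := r • ξ with hxx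
      refine lt_of_lt_of_le ?_
        (le_iSup_of_le t (le_iSup_of_le xx (le_of_eq (hterm t htpos xx).symm)))
      rw [EReal.coe_lt_coe_iff]
      have h1 : (inner ℝ ξ xx : ℝ) = r * ‖ξ‖^2 := by
        rw [hxx, real_inner_smul_right, real_inner_self_eq_norm_sq]
      have h2 : ‖xx‖^2 = cc := by
        rw [hxx, norm_smul, Real.norm_eq_abs, abs_of_pos hrpos, hcc]
        ring
      have h3 : r * ‖ξ‖^2 = |y| + 2 := by
        rw [hr]; field_simp
      have h4 : cc * (cc+1)⁻¹ ≤ 1 := by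
        rw [← div_eq_mul_inv, div_le_one (by positivity)]
        linarith
      rw [h1, h2, h3, htβ, zero_mul, zero_add]
      linarith [le_abs_self y]
  · -- 0 < s
    rw [if_neg (lt_asymm hs), if_neg (by simp [hs.ne'])]
    rw [EReal.eq_top_iff_forall_lt]
    intro y
    set t : ℝ := (|y| + 1)/s with htdef
    have htpos : 0 < t := by positivity
    refine lt_of_lt_of_le ?_ (le_iSup_of_le t (le_iSup_of_le 0 (le_of_eq (hterm t htpos 0).symm)))
    rw [EReal.coe_lt_coe_iff]
    have h1 : (inner ℝ ξ (0 : Euc N) : ℝ) = 0 := inner_zero_right ξ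
    have h2 : ‖(0 : Euc N)‖ = 0 := norm_zero
    rw [h1, h2, htdef]
    have hst : s * ((|y| + 1)/s) = |y| + 1 := by field_simp
    have hz : (0:ℝ) ^ 2 * ((|y| + 1)/s) ^ (2/q-2) = 0 := by norm_num
    rw [hst, hz]
    linarith [le_abs_self y]


end
end

section
/- Let 1 < q < 2. The function F_q : ℝ×ℝ^N → [0,+∞] is convex: for every t₀,t₁ ∈ ℝ, x₀,x₁ ∈ ℝ^N and λ ∈ [0,1], F_q(λt₀+(1−λ)t₁, λx₀+(1−λ)x₁) ≤ λ F_q(t₀,x₀) + (1−λ) F_q(t₁,x₁). -/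
open MeasureTheory Filter Topology Set
open scoped ENNReal NNReal

noncomputable section

lemma Fq_nonneg {N : ℕ} (q t : ℝ) (x : Euc N) : 0 ≤ Fq q t x := by
  unfold Fq
  split_ifs with h1 h2
  · exact EReal.coe_nonneg.2 (by positivity)
  · exact le_refl _
  · exact le_top

lemma key_real (β : ℝ) (hβ0 : 0 < β) (hβ1 : β < 1) (t₀ t₁ : ℝ) (h₀ : 0 < t₀) (h₁ : 0 < t₁)
    (a₀ a₁ : ℝ) (ha₀ : 0 ≤ a₀) (ha₁ : 0 ≤ a₁) (l : ℝ) (hl0 : 0 ≤ l) (hl1 : l ≤ 1) :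
    (l * a₀ + (1 - l) * a₁) ^ 2 * (l * t₀ + (1 - l) * t₁) ^ (-β) ≤
      l * (a₀ ^ 2 * t₀ ^ (-β)) + (1 - l) * (a₁ ^ 2 * t₁ ^ (-β)) := by
  have h1l : (0:ℝ) ≤ 1 - l := by linarith
  have ht : 0 < l * t₀ + (1 - l) * t₁ := by
    rcases eq_or_lt_of_le hl1 with h | h
    · simp only [h]; linarith
    · have h2 := mul_pos (by linarith : (0:ℝ) < 1 - l) h₁
      nlinarith [mul_nonneg hl0 h₀.le]
  set s₀ := t₀ ^ β with hs₀def
  set s₁ := t₁ ^ β with hs₁def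
  set s := (l * t₀ + (1 - l) * t₁) ^ β with hsdef
  have hs₀ : 0 < s₀ := Real.rpow_pos_of_pos h₀ β
  have hs₁ : 0 < s₁ := Real.rpow_pos_of_pos h₁ β
  have hs : 0 < s := Real.rpow_pos_of_pos ht β
  have step1 : l * s₀ + (1 - l) * s₁ ≤ s := by
    have := (Real.concaveOn_rpow hβ0.le hβ1.le).2
      (Set.mem_Ici.2 h₀.le) (Set.mem_Ici.2 h₁.le) hl0 h1l (show l + (1 - l) = 1 by ring)
    simpa [smul_eq_mul] using this
  have cs : (l * a₀ + (1 - l) * a₁) ^ 2 * (s₀ * s₁) ≤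
      (l * s₀ + (1 - l) * s₁) * (l * (a₀ ^ 2 * s₁) + (1 - l) * (a₁ ^ 2 * s₀)) := by
    nlinarith [sq_nonneg (a₀ * s₁ - a₁ * s₀), mul_nonneg hl0 (by linarith : (0:ℝ) ≤ 1 - l),
      mul_nonneg hs₀.le hs₁.le]
  have hnn : 0 ≤ l * (a₀ ^ 2 * s₁) + (1 - l) * (a₁ ^ 2 * s₀) :=
    add_nonneg (mul_nonneg hl0 (by positivity)) (mul_nonneg h1l (by positivity))
  have step2 : (l * a₀ + (1 - l) * a₁) ^ 2 * (s₀ * s₁) ≤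
      (l * (a₀ ^ 2 * s₁) + (1 - l) * (a₁ ^ 2 * s₀)) * s :=
    cs.trans (by calc (l * s₀ + (1 - l) * s₁) * (l * (a₀ ^ 2 * s₁) + (1 - l) * (a₁ ^ 2 * s₀))
          = (l * (a₀ ^ 2 * s₁) + (1 - l) * (a₁ ^ 2 * s₀)) * (l * s₀ + (1 - l) * s₁) := by ring
      _ ≤ _ := mul_le_mul_of_nonneg_left step1 hnn)
  rw [Real.rpow_neg ht.le, Real.rpow_neg h₀.le, Real.rpow_neg h₁.le, ← hsdef, ← hs₀def, ← hs₁def]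
  rw [show l * (a₀ ^ 2 * s₀⁻¹) + (1 - l) * (a₁ ^ 2 * s₁⁻¹)
      = (l * (a₀ ^ 2 * s₁) + (1 - l) * (a₁ ^ 2 * s₀)) / (s₀ * s₁) by field_simp]
  rw [← div_eq_mul_inv, div_le_div_iff₀ hs (by positivity)]
  exact step2


lemma key_bdry (β : ℝ) (hβ1 : β ≤ 1) (m t a : ℝ) (hm0 : 0 < m) (hm1 : m ≤ 1) (ht : 0 < t)
    (ha : 0 ≤ a) : (m * a) ^ 2 * (m * t) ^ (-β) ≤ m * (a ^ 2 * t ^ (-β)) := by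
  have h1 : (m * t) ^ (-β) = m ^ (-β) * t ^ (-β) := Real.mul_rpow hm0.le ht.le
  have h2 : (m * a) ^ 2 * (m * t) ^ (-β) = m ^ ((2:ℝ) + (-β)) * (a ^ 2 * t ^ (-β)) := by
    rw [h1, Real.rpow_add hm0, show ((2:ℝ)) = ((2:ℕ):ℝ) by norm_num, Real.rpow_natCast]
    ring
  rw [h2]
  have h3 : m ^ ((2:ℝ) + (-β)) ≤ m ^ (1:ℝ) :=
    Real.rpow_le_rpow_of_exponent_ge hm0 hm1 (by linarith)
  rw [Real.rpow_one] at h3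
  have h4 : (0:ℝ) ≤ a ^ 2 * t ^ (-β) := by positivity
  exact mul_le_mul_of_nonneg_right h3 h4

lemma Fq_zero {N : ℕ} (q : ℝ) : Fq q 0 (0 : Euc N) = 0 := by
  unfold Fq; rw [if_neg (lt_irrefl 0), if_pos ⟨rfl, rfl⟩]

lemma Fq_pos_eq {N : ℕ} (q t : ℝ) (ht : 0 < t) (x : Euc N) :
    Fq q t x = ((‖x‖ ^ 2 * t ^ (2 / q - 2) : ℝ) : EReal) := by
  unfold Fq; rw [if_pos ht]


/-- **Convexity of `F_q`.** For `1 < q < 2`, every `t₀ t₁ ∈ ℝ`, `x₀ x₁ ∈ ℝ^N` and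
`λ ∈ [0,1]`, one has `F_q(λt₀+(1-λ)t₁, λx₀+(1-λ)x₁) ≤ λ F_q(t₀,x₀) + (1-λ) F_q(t₁,x₁)`. -/
theorem Fq_convex {N : ℕ} (q : ℝ) (hq1 : 1 < q) (hq2 : q < 2)
    (t₀ t₁ : ℝ) (x₀ x₁ : Euc N) (l : ℝ) (hl0 : 0 ≤ l) (hl1 : l ≤ 1) :
    Fq q (l * t₀ + (1 - l) * t₁) (l • x₀ + (1 - l) • x₁) ≤
      (l : EReal) * Fq q t₀ x₀ + ((1 - l : ℝ) : EReal) * Fq q t₁ x₁ := by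

  have hq0 : 0 < q := by linarith
  have hβ0 : 0 < 2 - 2 / q := by
    have : 2 / q < 2 := by rw [div_lt_iff₀ hq0]; nlinarith
    linarith
  have hβ1 : 2 - 2 / q < 1 := by
    have : 1 < 2 / q := by rw [lt_div_iff₀ hq0]; linarith
    linarith
  have hexp : 2 / q - 2 = -(2 - 2 / q) := by ring
  rcases eq_or_lt_of_le hl0 with h0 | h0
  · rw [← h0]
    norm_num
  rcases eq_or_lt_of_le hl1 with h1 | h1
  · rw [h1]
    norm_num
  have hl' : 0 < 1 - l := by linarith
  -- dispense with the ⊤ cases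
  by_cases h₀ : ¬ (0 < t₀) ∧ ¬ (t₀ = 0 ∧ x₀ = 0)
  · have htop : Fq q t₀ x₀ = ⊤ := by unfold Fq; rw [if_neg h₀.1, if_neg h₀.2]
    have hne : ((1 - l : ℝ) : EReal) * Fq q t₁ x₁ ≠ ⊥ := by
      have : (0 : EReal) ≤ ((1 - l : ℝ) : EReal) * Fq q t₁ x₁ :=
        mul_nonneg (EReal.coe_nonneg.2 hl'.le) (Fq_nonneg q t₁ x₁)
      exact ((lt_of_lt_of_le (show (⊥:EReal) < 0 by simp) this).ne')
    rw [htop, EReal.coe_mul_top_of_pos h0, EReal.top_add_of_ne_bot hne]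
    exact le_top
  by_cases h₁' : ¬ (0 < t₁) ∧ ¬ (t₁ = 0 ∧ x₁ = 0)
  · have htop : Fq q t₁ x₁ = ⊤ := by unfold Fq; rw [if_neg h₁'.1, if_neg h₁'.2]
    have hne : (l : EReal) * Fq q t₀ x₀ ≠ ⊥ := by
      have : (0 : EReal) ≤ (l : EReal) * Fq q t₀ x₀ :=
        mul_nonneg (EReal.coe_nonneg.2 hl0) (Fq_nonneg q t₀ x₀)
      exact ((lt_of_lt_of_le (show (⊥:EReal) < 0 by simp) this).ne')
    rw [htop, EReal.coe_mul_top_of_pos hl', EReal.add_top_of_ne_bot hne]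
    exact le_top
  rw [not_and_or, not_not, not_not] at h₀ h₁'
  rcases h₀ with h₀ | ⟨ht₀, hx₀⟩ <;> rcases h₁' with h₁ | ⟨ht₁, hx₁⟩
  · -- both positive: the main case
    have ht : 0 < l * t₀ + (1 - l) * t₁ := by positivity
    rw [Fq_pos_eq q _ ht, Fq_pos_eq q _ h₀, Fq_pos_eq q _ h₁,
      ← EReal.coe_mul, ← EReal.coe_mul, ← EReal.coe_add, EReal.coe_le_coe_iff, hexp]
    have hnorm : ‖l • x₀ + (1 - l) • x₁‖ ≤ l * ‖x₀‖ + (1 - l) * ‖x₁‖ := by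
      refine (norm_add_le _ _).trans ?_
      rw [norm_smul, norm_smul, Real.norm_eq_abs, Real.norm_eq_abs,
        abs_of_nonneg hl0, abs_of_nonneg hl'.le]
    have hstep : ‖l • x₀ + (1 - l) • x₁‖ ^ 2 * (l * t₀ + (1 - l) * t₁) ^ (-(2 - 2 / q)) ≤
        (l * ‖x₀‖ + (1 - l) * ‖x₁‖) ^ 2 * (l * t₀ + (1 - l) * t₁) ^ (-(2 - 2 / q)) := by
      have := pow_le_pow_left₀ (norm_nonneg _) hnorm 2
      exact mul_le_mul_of_nonneg_right this (Real.rpow_nonneg ht.le _)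
    refine hstep.trans ?_
    have := key_real (2 - 2 / q) hβ0 hβ1 t₀ t₁ h₀ h₁ ‖x₀‖ ‖x₁‖ (norm_nonneg _) (norm_nonneg _)
      l hl0 hl1
    exact this
  · -- t₁ = 0, x₁ = 0
    subst ht₁; subst hx₁
    rw [Fq_zero]
    simp only [mul_zero, add_zero, smul_zero]
    have ht : 0 < l * t₀ := mul_pos h0 h₀
    rw [Fq_pos_eq q _ ht, Fq_pos_eq q _ h₀,
      ← EReal.coe_mul, EReal.coe_le_coe_iff, hexp]
    have hn : ‖l • x₀‖ = l * ‖x₀‖ := by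
      rw [norm_smul, Real.norm_eq_abs, abs_of_nonneg hl0]
    rw [hn]
    exact key_bdry (2 - 2 / q) (by linarith) l t₀ ‖x₀‖ h0 hl1 h₀ (norm_nonneg _)
  · -- t₀ = 0, x₀ = 0
    subst ht₀; subst hx₀
    rw [Fq_zero]
    simp only [mul_zero, zero_add, smul_zero]
    have ht : 0 < (1 - l) * t₁ := mul_pos hl' h₁
    rw [Fq_pos_eq q _ ht, Fq_pos_eq q _ h₁,
      ← EReal.coe_mul, EReal.coe_le_coe_iff, hexp]
    have hn : ‖(1 - l) • x₁‖ = (1 - l) * ‖x₁‖ := by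
      rw [norm_smul, Real.norm_eq_abs, abs_of_nonneg hl'.le]
    rw [hn]
    exact key_bdry (2 - 2 / q) (by linarith) (1 - l) t₁ ‖x₁‖ hl' (by linarith) h₁ (norm_nonneg _)
  · -- both zero
    subst ht₀; subst hx₀; subst ht₁; subst hx₁
    simp [Fq_zero]

end
end

section
/- Let 1 < q < 2 and ξ ∈ ℝ^N with ξ ≠ 0. Then sup over (t,x) ∈ ({(t,x) : t > 0} ∪ {(0,0)}) ⊂ ℝ×ℝ^N of [−t + ⟨ξ,x⟩ − F_q(t,x)] equals (q/2)^{q/(2−q)} · ((2−q)/2) · ((1/q)((q−1)/q)^{q−1})^{2/(2−q)} · |ξ|^{2q/(2−q)}. -/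
open MeasureTheory Filter Topology Set
open scoped ENNReal NNReal

noncomputable section

lemma cTbeta {c β : ℝ} (hc : 0 < c) (hβ0 : 0 < β) (hβ1 : β < 1) :
    c * ((c*β)^(1/(1-β)) : ℝ) ^ β = (c*β)^(1/(1-β)) / β := by
  have hcβ : 0 < c * β := mul_pos hc hβ0
  have hT : 0 < ((c*β)^(1/(1-β)) : ℝ) := Real.rpow_pos_of_pos hcβ _
  set T : ℝ := (c*β)^(1/(1-β)) with hTdef
  have hT1β : T ^ (1 - β) = c * β := by
    rw [hTdef, ← Real.rpow_mul hcβ.le, one_div,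
      inv_mul_cancel₀ (by linarith : (1:ℝ) - β ≠ 0), Real.rpow_one]
  have hmul : T ^ β * (c * β) = T := by
    rw [← hT1β, ← Real.rpow_add hT, show β + (1 - β) = 1 by ring, Real.rpow_one]
  field_simp
  nlinarith [hmul]

lemma bernoulli_aux {c β : ℝ} (hc : 0 < c) (hβ0 : 0 < β) (hβ1 : β < 1) {t : ℝ} (ht : 0 < t) :
    -t + c * t ^ β ≤ (c * β) ^ (1/(1-β)) * (1 - β) / β := by
  have hcβ : 0 < c * β := mul_pos hc hβ0
  have hT : 0 < ((c*β)^(1/(1-β)) : ℝ) := Real.rpow_pos_of_pos hcβ _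
  set T : ℝ := (c*β)^(1/(1-β)) with hTdef
  have hcT : c * T ^ β = T / β := cTbeta hc hβ0 hβ1
  have hTβ : 0 < T ^ β := Real.rpow_pos_of_pos hT _
  have hu : (t / T) ^ β ≤ β * (t / T) + (1 - β) := by
    have h := Real.geom_mean_le_arith_mean2_weighted hβ0.le (by linarith : (0:ℝ) ≤ 1 - β)
      (div_pos ht hT).le zero_le_one (by ring)
    simpa using h
  have hct : c * t ^ β = (T / β) * (t / T) ^ β := by
    rw [Real.div_rpow ht.le hT.le, ← hcT]
    field_simp
  have h2 : (T / β) * (t / T) ^ β ≤ (T / β) * (β * (t / T) + (1 - β)) :=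
    mul_le_mul_of_nonneg_left hu (by positivity)
  have h3 : (T / β) * (β * (t / T) + (1 - β)) = t + T * (1 - β) / β := by
    field_simp
  linarith [hct ▸ h2, h3 ▸ (le_refl ((T / β) * (β * (t / T) + (1 - β))))]

lemma const_eq (q r : ℝ) (hq1 : 1 < q) (hq2 : q < 2) (hr : 0 < r) :
    (r^2 * (q-1)/(2*q)) ^ (q/(2-q)) * (2-q) / (2*(q-1))
      = (q/2) ^ (q/(2-q)) * ((2-q)/2) * ((1/q) * ((q-1)/q) ^ (q-1)) ^ (2/(2-q))
        * r ^ (2*q/(2-q)) := by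
  have hq0 : (0:ℝ) < q := by linarith
  have hq1' : (0:ℝ) < q - 1 := by linarith
  have h2q : (0:ℝ) < 2 - q := by linarith
  have hbase : (0:ℝ) < r^2 * (q-1)/(2*q) := by positivity
  have hinner : (0:ℝ) < (1/q) * ((q-1)/q) ^ (q-1) :=
    mul_pos (by positivity) (Real.rpow_pos_of_pos (div_pos hq1' hq0) _)
  have hL : (0:ℝ) < (r^2 * (q-1)/(2*q)) ^ (q/(2-q)) * (2-q) / (2*(q-1)) :=
    div_pos (mul_pos (Real.rpow_pos_of_pos hbase _) h2q) (by linarith)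
  have hR : (0:ℝ) < (q/2) ^ (q/(2-q)) * ((2-q)/2) * ((1/q) * ((q-1)/q) ^ (q-1)) ^ (2/(2-q))
        * r ^ (2*q/(2-q)) :=
    mul_pos (mul_pos (mul_pos (Real.rpow_pos_of_pos (by positivity) _) (by positivity))
      (Real.rpow_pos_of_pos hinner _)) (Real.rpow_pos_of_pos hr _)
  rw [← Real.exp_log hL, ← Real.exp_log hR]
  congr 1
  rw [Real.log_div (by positivity) (by positivity), Real.log_mul (by positivity) h2q.ne',
    Real.log_rpow hbase, Real.log_div (by positivity) (by positivity),
    Real.log_mul (by positivity) hq1'.ne', Real.log_pow, Real.log_mul two_ne_zero hq0.ne',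
    Real.log_mul (by positivity) (Real.rpow_pos_of_pos hr _).ne',
    Real.log_mul (by positivity) (Real.rpow_pos_of_pos hinner _).ne',
    Real.log_mul (Real.rpow_pos_of_pos (by positivity : (0:ℝ) < q/2) (q/(2-q))).ne'
      (by positivity : (0:ℝ) < (2-q)/2).ne',
    Real.log_rpow (by positivity : (0:ℝ) < q/2), Real.log_rpow hinner, Real.log_rpow hr,
    Real.log_mul (by positivity : ((1:ℝ)/q) ≠ 0)
      (Real.rpow_pos_of_pos (div_pos hq1' hq0) _).ne',
    Real.log_rpow (div_pos hq1' hq0),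
    Real.log_div (by norm_num : (1:ℝ) ≠ 0) hq0.ne', Real.log_one,
    Real.log_div hq0.ne' two_ne_zero,
    Real.log_div hq1'.ne' hq0.ne',
    Real.log_div h2q.ne' two_ne_zero, Real.log_mul two_ne_zero hq1'.ne']
  field_simp
  ring

lemma Fq_of_pos {N : ℕ} (q t : ℝ) (x : Euc N) (ht : 0 < t) :
    Fq q t x = ((‖x‖ ^ 2 * t ^ (2 / q - 2) : ℝ) : EReal) := by
  unfold Fq
  rw [if_pos ht]

/-- **Computation of `F_q^*(-1,ξ)`.** For `1 < q < 2` and `ξ ≠ 0`, the supremum of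
`-t + ⟨ξ,x⟩ - F_q(t,x)` over `{(t,x) : t > 0} ∪ {(0,0)}` equals
`(q/2)^{q/(2-q)} ((2-q)/2) ((1/q)((q-1)/q)^{q-1})^{2/(2-q)} |ξ|^{2q/(2-q)}`. -/
theorem Fq_conjugate_at_neg_one {N : ℕ} (q : ℝ) (hq1 : 1 < q) (hq2 : q < 2)
    (ξ : Euc N) (hξ : ξ ≠ 0) :
    ⨆ p : {p : ℝ × Euc N // 0 < p.1 ∨ (p.1 = 0 ∧ p.2 = 0)},
        (((-p.val.1 + (inner ℝ ξ p.val.2 : ℝ)) : ℝ) : EReal) - Fq q p.val.1 p.val.2 =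
      (((q / 2) ^ (q / (2 - q)) * ((2 - q) / 2) *
        ((1 / q) * ((q - 1) / q) ^ (q - 1)) ^ (2 / (2 - q)) *
        ‖ξ‖ ^ (2 * q / (2 - q)) : ℝ) : EReal) := by
  have hq0 : (0:ℝ) < q := by linarith
  have hq1' : (0:ℝ) < q - 1 := by linarith
  have h2q : (0:ℝ) < 2 - q := by linarith
  have hr : 0 < ‖ξ‖ := norm_pos_iff.2 hξ
  set β : ℝ := 2 - 2/q with hβdef
  have hβ0 : 0 < β := by
    rw [hβdef, sub_pos, div_lt_iff₀ hq0]; linarith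
  have hβ1 : β < 1 := by
    have h : 1 < 2/q := by rw [lt_div_iff₀ hq0]; linarith
    rw [hβdef]; linarith
  set c : ℝ := ‖ξ‖^2/4 with hcdef
  have hc : 0 < c := by positivity
  set T : ℝ := (c*β)^(1/(1-β)) with hTdef
  have hT : 0 < T := Real.rpow_pos_of_pos (mul_pos hc hβ0) _
  set M : ℝ := (q / 2) ^ (q / (2 - q)) * ((2 - q) / 2) *
        ((1 / q) * ((q - 1) / q) ^ (q - 1)) ^ (2 / (2 - q)) * ‖ξ‖ ^ (2 * q / (2 - q)) with hMdef
  have hMval : T * (1-β)/β = M := by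
    have e1 : c * β = ‖ξ‖^2 * (q-1)/(2*q) := by
      rw [hcdef, hβdef]; field_simp; ring
    have e2 : 1/(1-β) = q/(2-q) := by
      rw [hβdef]
      rw [show 1 - (2 - 2/q) = (2-q)/q by field_simp; ring, one_div_div]
    have e3 : T * (1-β)/β = T * ((2-q) / (2*(q-1))) := by
      have h1 : 1 - β = (2-q)/q := by rw [hβdef]; field_simp; try ring
      have h2 : β = 2*(q-1)/q := by rw [hβdef]; field_simp; try ring
      rw [h1, h2]
      field_simp [hq0.ne', hq1'.ne']
      try ring
    rw [e3, hTdef, e1, e2, hMdef, ← const_eq q ‖ξ‖ hq1 hq2 hr]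
    ring
  have hM : 0 < M := by
    rw [← hMval]
    exact div_pos (mul_pos hT (by linarith)) hβ0
  have hEneg : ∀ t : ℝ, 0 < t → t ^ (2/q - 2) = (t ^ β)⁻¹ := by
    intro t ht
    rw [show 2/q - 2 = -β by rw [hβdef]; ring, Real.rpow_neg ht.le]
  have key : ∀ t : ℝ, 0 < t → ∀ x : Euc N,
      -t + (inner ℝ ξ x : ℝ) - ‖x‖^2 * t^(2/q-2) ≤ M := by
    intro t ht x
    have hs : 0 < t ^ β := Real.rpow_pos_of_pos ht _
    have h1 : (inner ℝ ξ x : ℝ) ≤ ‖ξ‖ * ‖x‖ := real_inner_le_norm ξ x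
    have h2 : ‖ξ‖ * ‖x‖ - c * t^β ≤ ‖x‖^2 * (t^β)⁻¹ := by
      rw [← div_eq_mul_inv, le_div_iff₀ hs, hcdef]
      nlinarith [sq_nonneg (‖ξ‖ * t^β - 2*‖x‖), hs]
    have h3 : -t + c * t^β ≤ T * (1-β)/β := by
      have := bernoulli_aux hc hβ0 hβ1 ht
      rw [hTdef]
      linarith [this]
    rw [hEneg t ht]
    linarith [hMval ▸ h3]
  refine le_antisymm (iSup_le ?_) ?_
  · rintro ⟨⟨t, x⟩, hp | ⟨ht0, hx0⟩⟩
    · simp only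
      rw [Fq_of_pos q t x hp, ← EReal.coe_sub, EReal.coe_le_coe_iff]
      have := key t hp x
      linarith
    · simp only at ht0 hx0 ⊢
      subst ht0; subst hx0
      rw [Fq_zero, ← EReal.coe_zero, ← EReal.coe_sub, EReal.coe_le_coe_iff]
      simp only [inner_zero_right, neg_zero, add_zero, sub_zero]
      linarith
  · set xs : Euc N := (T^β/2) • ξ with hxs
    refine le_trans ?_ (le_iSup _ (⟨(T, xs), Or.inl hT⟩ :
      {p : ℝ × Euc N // 0 < p.1 ∨ (p.1 = 0 ∧ p.2 = 0)}))
    simp only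
    rw [Fq_of_pos q T xs hT, ← EReal.coe_sub, EReal.coe_le_coe_iff]
    have hTβ : 0 < T^β := Real.rpow_pos_of_pos hT _
    have hinner : (inner ℝ ξ xs : ℝ) = (T^β/2) * ‖ξ‖^2 := by
      rw [hxs, real_inner_smul_right, real_inner_self_eq_norm_sq]
    have hnorm : ‖xs‖^2 = (T^β/2)^2 * ‖ξ‖^2 := by
      rw [hxs, norm_smul, mul_pow, Real.norm_eq_abs, sq_abs]
    have hcT : c * T ^ β = T / β := by
      rw [hTdef]; exact cTbeta hc hβ0 hβ1
    have hval : -T + (inner ℝ ξ xs : ℝ) - ‖xs‖^2 * T^(2/q-2) = -T + c * T^β := by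
      rw [hinner, hnorm, hEneg T hT, hcdef]
      field_simp
      ring
    have hfin : -T + c * T^β = M := by
      rw [hcT, ← hMval]
      field_simp
      ring
    rw [hval, hfin]
end
end

section
/- Let 1 < q < 2. For every (s,ξ) ∈ ℝ×ℝ^N, the Legendre–Fenchel transform of (1/(2q))F_q satisfies ((1/(2q))F_q)^*(s,ξ) = ((2−q)/2)·(q−1)^{2(q−1)/(2−q)}·(G_q(s,ξ))^{2/(2−q)}. More generally, for every constant C > 0, (C F_q)^*(s,ξ) = C^{−q/(2−q)} F_q^*(s,ξ). -/
open MeasureTheory Filter Topology Set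
open scoped ENNReal NNReal

noncomputable section

open Classical in
/-- The function `G_q`, with values in `[0,+∞]`. -/
def Gq {N : ℕ} (q : ℝ) (s : ℝ) (ξ : Euc N) : ℝ≥0∞ :=
  if s < 0 then ENNReal.ofReal (‖ξ‖ ^ q / |s| ^ (q - 1))
  else if s = 0 ∧ ξ = 0 then 0 else ⊤

/-! For `t > 0` the supremum over `x` of `⟨ξ, x⟩ - C t^(2/q-2) |x|²` is `|ξ|² t^α / (4C)` with
`α = 2 - 2/q ∈ (0, 1)`, so `(C F_q)^*(s, ξ)` is the supremum over `t ≥ 0` of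
`s t + |ξ|² t^α / (4C)`.
For `s < 0` weighted AM–GM computes this maximum in closed form, and it equals
`(2qC)^(-q/(2-q)) · (2-q)/2 · (q-1)^(2(q-1)/(2-q)) · G_q(s, ξ)^(2/(2-q))`; for `s ≥ 0` the supremum
is `0` or `+∞` exactly where `G_q` is. Both claims are instances of this formula for `(C F_q)^*`. -/

section InnerProductSpace
variable {E : Type*} [NormedAddCommGroup E] [InnerProductSpace ℝ E]

theorem isGreatest_inner_sub_mul_norm_sq {B : ℝ} (hB : 0 < B) (ξ : E) :
    IsGreatest (range fun x => inner ℝ ξ x - B * ‖x‖ ^ 2) (‖ξ‖ ^ 2 / (4 * B)) := by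
  refine ⟨⟨(2 * B)⁻¹ • ξ, ?_⟩, ?_⟩
  · simp only [real_inner_smul_right, real_inner_self_eq_norm_sq, norm_smul, Real.norm_eq_abs,
      abs_of_pos (inv_pos.2 (mul_pos two_pos hB)), mul_pow]
    field_simp
    ring
  · rintro _ ⟨x, rfl⟩
    rw [le_div_iff₀ (by positivity)]
    nlinarith [real_inner_le_norm ξ x, sq_nonneg (2 * B * ‖x‖ - ‖ξ‖)]

end InnerProductSpace

theorem isGreatest_mul_rpow_sub_mul {α σ A : ℝ} (hα0 : 0 < α) (hα1 : α < 1) (hσ : 0 < σ)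
    (hA : 0 ≤ A) :
    IsGreatest ((fun t => A * t ^ α - σ * t) '' Ici 0)
      ((1 - α) / α * σ * (A * α / σ) ^ (1 - α)⁻¹) := by
  -- `τ` is the critical point `A α τ^(α-1) = σ`; weighted AM–GM in `t` and `τ` gives the bound.
  set τ := (A * α / σ) ^ (1 - α)⁻¹
  have hτ : 0 ≤ τ := by positivity
  have hAτ : A = σ / α * τ ^ (1 - α) := by
    rw [Real.rpow_inv_rpow (by positivity) (by linarith)]
    field_simp
  refine ⟨⟨τ, hτ, ?_⟩, ?_⟩
  · have hττ : τ ^ (1 - α) * τ ^ α = τ := by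
      rw [← Real.rpow_add' hτ (by norm_num), sub_add_cancel, Real.rpow_one]
    simp only [hAτ, mul_assoc, hττ]
    field_simp
  · rintro _ ⟨t, ht, rfl⟩
    have amgm := Real.geom_mean_le_arith_mean2_weighted hα0.le (by linarith) (mem_Ici.1 ht) hτ
      (add_sub_cancel α 1)
    have := mul_le_mul_of_nonneg_left amgm (by positivity : 0 ≤ σ / α)
    rw [hAτ]
    field_simp at this ⊢
    nlinarith

theorem EReal.biSup_coe_eq_of_isGreatest {ι : Type*} {f : ι → ℝ} {s : Set ι} {M : ℝ}
    (h : IsGreatest (f '' s) M) : ⨆ i ∈ s, (f i : EReal) = M := by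
  refine le_antisymm (iSup₂_le fun i hi => EReal.coe_le_coe (h.2 ⟨i, hi, rfl⟩)) ?_
  obtain ⟨i, hi, hiM⟩ := h.1
  exact le_iSup₂_of_le i hi (hiM ▸ le_rfl)

theorem EReal.biSup_Ici_coe_eq_top_of_tendsto {f : ℝ → ℝ} (h : Tendsto f atTop atTop) (a : ℝ) :
    ⨆ t ∈ Ici a, (f t : EReal) = ⊤ := by
  refine (iSup₂_eq_top _).2 fun b hb => ?_
  obtain ⟨M, hbM, -⟩ := EReal.lt_iff_exists_real_btwn.1 hb
  obtain ⟨t, htM, hta⟩ := ((h.eventually_gt_atTop M).and (eventually_ge_atTop a)).exists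
  exact ⟨t, hta, hbM.trans (EReal.coe_lt_coe htM)⟩

section Fq
variable {N : ℕ} {q C : ℝ}

theorem iSup_sub_const_mul_Fq (hq : q ≠ 1) (hC : 0 < C) (s t : ℝ) (ξ : Euc N) :
    ⨆ x : Euc N, ((s * t + inner ℝ ξ x : ℝ) : EReal) - (C : EReal) * Fq q t x =
      ⨆ _ : t ∈ Ici 0, ((s * t + ‖ξ‖ ^ 2 / (4 * C) * t ^ (2 - 2 / q) : ℝ) : EReal) := by
  rcases lt_trichotomy t 0 with ht | rfl | ht
  · rw [iSup_neg (show t ∉ Ici 0 from not_le.2 ht)]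
    refine iSup_eq_bot.2 fun x => ?_
    rw [Fq, if_neg ht.not_gt, if_neg (fun h => ht.ne h.1), EReal.coe_mul_top_of_pos hC,
      EReal.sub_top]
  · have hα : 2 - 2 / q ≠ 0 := by
      intro h
      rcases eq_or_ne q 0 with rfl | hq0
      · norm_num at h
      · exact hq (by field_simp at h; linarith)
    rw [iSup_pos (self_mem_Ici : (0 : ℝ) ∈ Ici 0), Real.zero_rpow hα]
    refine le_antisymm (iSup_le fun x => ?_) (le_iSup_of_le 0 (by simp [Fq]))
    by_cases hx : x = 0
    · simp [hx, Fq]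
    · simp [hx, Fq, EReal.coe_mul_top_of_pos hC]
  · rw [iSup_pos (show t ∈ Ici 0 from ht.le)]
    have hB : 0 < C * t ^ (2 / q - 2) := by positivity
    have hA : ‖ξ‖ ^ 2 / (4 * (C * t ^ (2 / q - 2))) = ‖ξ‖ ^ 2 / (4 * C) * t ^ (2 - 2 / q) := by
      rw [show 2 - 2 / q = -(2 / q - 2) by ring, Real.rpow_neg ht.le]
      field_simp
    have hterm : ∀ x : Euc N, ((s * t + inner ℝ ξ x : ℝ) : EReal) - (C : EReal) * Fq q t x =
        ((s * t + (inner ℝ ξ x - C * t ^ (2 / q - 2) * ‖x‖ ^ 2) : ℝ) : EReal) := by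
      intro x
      rw [Fq, if_pos ht, ← EReal.coe_mul, ← EReal.coe_sub]
      ring_nf
    have hquad := isGreatest_inner_sub_mul_norm_sq hB ξ
    rw [hA] at hquad
    simp_rw [hterm]
    refine le_antisymm (iSup_le fun x => EReal.coe_le_coe (by linarith [hquad.2 ⟨x, rfl⟩])) ?_
    obtain ⟨x, hx⟩ := hquad.1
    exact le_iSup_of_le x (EReal.coe_le_coe (by simp only at hx; linarith))

theorem legendre_const_mul_Fq_eq_biSup (hq : q ≠ 1) (hC : 0 < C) (s : ℝ) (ξ : Euc N) :
    legendre (fun t x => (C : EReal) * Fq q t x) s ξ =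
      ⨆ t ∈ Ici 0, ((s * t + ‖ξ‖ ^ 2 / (4 * C) * t ^ (2 - 2 / q) : ℝ) : EReal) :=
  iSup_congr fun t => iSup_sub_const_mul_Fq hq hC s t ξ

theorem optimum_value_eq_Gq_form {σ n : ℝ} (hq1 : 1 < q) (hq2 : q < 2) (hC : 0 < C)
    (hσ : 0 < σ) (hn : 0 ≤ n) :
    (1 - (2 - 2 / q)) / (2 - 2 / q) * σ *
        (n ^ 2 / (4 * C) * (2 - 2 / q) / σ) ^ (1 - (2 - 2 / q))⁻¹ =
      (2 * q * C) ^ (-(q / (2 - q))) * ((2 - q) / 2 * (q - 1) ^ (2 * (q - 1) / (2 - q))) *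
        (n ^ q / σ ^ (q - 1)) ^ (2 / (2 - q)) := by
  have hq0 : 0 < q := by linarith
  have hq1' : 0 < q - 1 := by linarith
  have h2q : 0 < 2 - q := by linarith
  set p := q / (2 - q) with hp
  have e1 : (1 - (2 - 2 / q))⁻¹ = p := by field_simp; ring
  have e2 : 2 * (q - 1) / (2 - q) = p - 1 := by rw [hp]; field_simp; ring
  have e3 : q * (2 / (2 - q)) = 2 * p := by rw [hp]; field_simp
  have e4 : (q - 1) * (2 / (2 - q)) = p - 1 := by rw [hp]; field_simp; ring
  have ebase : n ^ 2 / (4 * C) * (2 - 2 / q) / σ = n ^ 2 * (q - 1) / (2 * q * C * σ) := by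
    field_simp; ring
  rw [e1, e2, ebase, Real.div_rpow (by positivity) (by positivity),
    Real.mul_rpow (by positivity) hq1'.le, Real.div_rpow (by positivity) (by positivity),
    ← Real.rpow_mul hn, ← Real.rpow_mul hσ.le, e3, e4, Real.rpow_neg (by positivity),
    Real.rpow_sub hq1', Real.rpow_sub hσ, Real.rpow_one, Real.rpow_one,
    Real.mul_rpow (by positivity) hσ.le, ← Real.rpow_natCast n 2, ← Real.rpow_mul hn]
  have : 0 < (2 * q * C) ^ p := by positivity
  have : 0 < σ ^ p := by positivity
  field_simp
  push_cast
  ring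

theorem legendre_const_mul_Fq (hq1 : 1 < q) (hq2 : q < 2) (hC : 0 < C) (s : ℝ) (ξ : Euc N) :
    legendre (fun t x => (C : EReal) * Fq q t x) s ξ =
      (((2 * q * C) ^ (-(q / (2 - q))) * ((2 - q) / 2 * (q - 1) ^ (2 * (q - 1) / (2 - q))) : ℝ)
        : EReal) * ((Gq q s ξ ^ (2 / (2 - q)) : ℝ≥0∞) : EReal) := by
  have hq0 : 0 < q := by linarith
  have hr : 0 < 2 / (2 - q) := div_pos two_pos (by linarith)
  have hα0 : 0 < 2 - 2 / q := by rw [sub_pos, div_lt_iff₀ hq0]; linarith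
  have hα1 : 2 - 2 / q < 1 := by rw [sub_lt_comm, lt_div_iff₀ hq0]; linarith
  set κ := (2 * q * C) ^ (-(q / (2 - q))) * ((2 - q) / 2 * (q - 1) ^ (2 * (q - 1) / (2 - q)))
  have hκ : 0 < κ :=
    mul_pos (by positivity) (mul_pos (by linarith) (Real.rpow_pos_of_pos (by linarith) _))
  have hGq_top (h : ¬s < 0) (h' : ¬(s = 0 ∧ ξ = 0)) :
      (κ : EReal) * ((Gq q s ξ ^ (2 / (2 - q)) : ℝ≥0∞) : EReal) = ⊤ := by
    rw [Gq, if_neg h, if_neg h', ENNReal.top_rpow_of_pos hr, EReal.coe_ennreal_top,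
      EReal.coe_mul_top_of_pos hκ]
  rw [legendre_const_mul_Fq_eq_biSup (by linarith) hC]
  rcases lt_trichotomy s 0 with hs | rfl | hs
  · have hσ : 0 < -s := neg_pos.2 hs
    have hmax := isGreatest_mul_rpow_sub_mul hα0 hα1 hσ (by positivity : 0 ≤ ‖ξ‖ ^ 2 / (4 * C))
    have hG : 0 ≤ ‖ξ‖ ^ q / (-s) ^ (q - 1) := by positivity
    simp_rw [show ∀ t : ℝ, s * t + ‖ξ‖ ^ 2 / (4 * C) * t ^ (2 - 2 / q) =
      ‖ξ‖ ^ 2 / (4 * C) * t ^ (2 - 2 / q) - -s * t from fun t => by ring]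
    rw [EReal.biSup_coe_eq_of_isGreatest hmax, Gq, if_pos hs, abs_of_neg hs,
      ENNReal.ofReal_rpow_of_nonneg hG hr.le, EReal.coe_ennreal_ofReal,
      max_eq_left (by positivity), ← EReal.coe_mul,
      optimum_value_eq_Gq_form hq1 hq2 hC hσ (norm_nonneg ξ)]
  · by_cases hξ : ξ = 0
    · subst hξ
      simp [Gq, ENNReal.zero_rpow_of_pos hr, -mem_Ici, biSup_const nonempty_Ici]
    · rw [hGq_top (lt_irrefl 0) (fun h => hξ h.2)]
      refine EReal.biSup_Ici_coe_eq_top_of_tendsto ?_ 0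
      simpa using (tendsto_rpow_atTop hα0).const_mul_atTop (by positivity : 0 < ‖ξ‖ ^ 2 / (4 * C))
  · rw [hGq_top hs.not_gt (fun h => hs.ne' h.1)]
    refine EReal.biSup_Ici_coe_eq_top_of_tendsto ?_ 0
    refine (tendsto_id.const_mul_atTop hs).atTop_add_zero_eventuallyLE ?_
    filter_upwards [eventually_ge_atTop 0] with t ht using by positivity

end Fq

/-- **Scaling of the Legendre transform and relation between `F_q^*` and `G_q`.**
For `1 < q < 2`: `((1/(2q))F_q)^*(s,ξ) = ((2-q)/2)(q-1)^{2(q-1)/(2-q)} G_q(s,ξ)^{2/(2-q)}`,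
and for every `C > 0`, `(C F_q)^*(s,ξ) = C^{-q/(2-q)} F_q^*(s,ξ)`. -/
theorem legendre_scaling_and_Gq {N : ℕ} (q : ℝ) (hq1 : 1 < q) (hq2 : q < 2) :
    (∀ (s : ℝ) (ξ : Euc N),
      legendre (fun t x => ((1 / (2 * q) : ℝ) : EReal) * Fq q t x) s ξ =
        (((2 - q) / 2 * (q - 1) ^ (2 * (q - 1) / (2 - q)) : ℝ) : EReal) *
          ((Gq q s ξ ^ (2 / (2 - q)) : ℝ≥0∞) : EReal)) ∧
    (∀ (C : ℝ), 0 < C → ∀ (s : ℝ) (ξ : Euc N),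
      legendre (fun t x => ((C : ℝ) : EReal) * Fq q t x) s ξ =
        ((C ^ (-(q / (2 - q))) : ℝ) : EReal) * legendre (Fq q) s ξ) := by
  have hq0 : 0 < q := by linarith
  refine ⟨fun s ξ => ?_, fun C hC s ξ => ?_⟩
  · rw [legendre_const_mul_Fq hq1 hq2 (by positivity), mul_one_div_cancel (by positivity),
      Real.one_rpow, one_mul]
  · have hFq : legendre (Fq q) s ξ =
        legendre (fun t x => ((1 : ℝ) : EReal) * Fq q t x) s ξ := by
      simp only [EReal.coe_one, one_mul]
    rw [hFq, legendre_const_mul_Fq hq1 hq2 hC, legendre_const_mul_Fq hq1 hq2 one_pos, mul_one,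
      mul_comm (2 * q) C, Real.mul_rpow hC.le (by positivity), mul_assoc, EReal.coe_mul,
      mul_assoc]

end
end
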